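/- Under the frame setup with S, v of class C², for all coordinate indices α, β one has the pointwise curvature identity ∂_α A_β − ∂_β A_α = Im( ψ_α · conj(ψ_β) ). -/

import Mathlib

/-!
Differentiating `A_β = ⟨w, ∂_β v⟩` gives `∂_α A_β = ⟨∂_α w, ∂_β v⟩ + ⟨w, ∂_α ∂_β v⟩`, and the
second-order terms cancel in `∂_α A_β - ∂_β A_α` by the symmetry of second derivatives.
Expanding `⟨∂_α w, ∂_β v⟩` in the orthonormal frame `(S, v, w)`, the differentiated
orthonormality relations `⟨e_i, ∂e_j⟩ = -⟨e_j, ∂e_i⟩` kill the `v`- and `w`-components and leave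
`⟨∂_α w, S⟩⟨S, ∂_β v⟩ = ⟨w, ∂_α S⟩⟨v, ∂_β S⟩`, whose antisymmetrisation is `Im(ψ_α conj ψ_β)`.
-/

open Matrix

/-- Partial derivative of `f` in the `α`-th coordinate direction. -/
noncomputable def pd {n : ℕ} {E : Type*} [NormedAddCommGroup E] [NormedSpace ℝ E]
    (f : (Fin n → ℝ) → E) (α : Fin n) (p : Fin n → ℝ) : E :=
  fderiv ℝ f p (Pi.single α 1)

/-- The complexified differentiated field `ψ_α = ⟨v, ∂_α S⟩ + i ⟨w, ∂_α S⟩`. -/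
noncomputable def framePsi {n : ℕ} (S v w : (Fin n → ℝ) → Fin 3 → ℝ) (α : Fin n)
    (p : Fin n → ℝ) : ℂ :=
  ((v p ⬝ᵥ pd S α p : ℝ) : ℂ) + Complex.I * ((w p ⬝ᵥ pd S α p : ℝ) : ℂ)

/-- The real connection coefficient `A_α = ⟨w, ∂_α v⟩`. -/
noncomputable def frameA {n : ℕ} (v w : (Fin n → ℝ) → Fin 3 → ℝ) (α : Fin n)
    (p : Fin n → ℝ) : ℝ :=
  w p ⬝ᵥ pd v α p

section PartialDerivative

variable {n : ℕ} {E F G : Type*} [NormedAddCommGroup E] [NormedSpace ℝ E]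
  [NormedAddCommGroup F] [NormedSpace ℝ F] [NormedAddCommGroup G] [NormedSpace ℝ G]

theorem pd_of_bilinear (B : E →L[ℝ] F →L[ℝ] G) {f : (Fin n → ℝ) → E} {g : (Fin n → ℝ) → F}
    {p : Fin n → ℝ} (hf : DifferentiableAt ℝ f p) (hg : DifferentiableAt ℝ g p) (α : Fin n) :
    pd (fun q => B (f q) (g q)) α p = B (pd f α p) (g p) + B (f p) (pd g α p) := by
  rw [pd, B.fderiv_of_bilinear hf hg, add_comm]
  rfl

theorem pd_dotProduct {ι : Type*} [Fintype ι] {f g : (Fin n → ℝ) → ι → ℝ} {p : Fin n → ℝ}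
    (hf : DifferentiableAt ℝ f p) (hg : DifferentiableAt ℝ g p) (α : Fin n) :
    pd (fun q => f q ⬝ᵥ g q) α p = pd f α p ⬝ᵥ g p + f p ⬝ᵥ pd g α p :=
  pd_of_bilinear (dotProductBilin ℝ ℝ : (ι → ℝ) →ₗ[ℝ] (ι → ℝ) →ₗ[ℝ] ℝ).toContinuousBilinearMap
    hf hg α

theorem ContDiff.pd {k m : WithTop ℕ∞} {f : (Fin n → ℝ) → F} (hf : ContDiff ℝ k f)
    (hmk : m + 1 ≤ k) (α : Fin n) : ContDiff ℝ m (pd f α) :=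
  (hf.fderiv_right hmk).clm_apply contDiff_const

theorem pd_pd_comm {f : (Fin n → ℝ) → F} (hf : ContDiff ℝ 2 f) (α β : Fin n) (p : Fin n → ℝ) :
    pd (pd f β) α p = pd (pd f α) β p := by
  have hdf : Differentiable ℝ (fderiv ℝ f) :=
    (hf.fderiv_right (m := 1) le_rfl).differentiable one_ne_zero
  have hpd : ∀ γ δ, pd (pd f δ) γ p
      = fderiv ℝ (fderiv ℝ f) p (Pi.single γ 1) (Pi.single δ 1) := fun γ δ => by
    rw [pd, show pd f δ = fun q => fderiv ℝ f q (Pi.single δ 1) from rfl,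
      fderiv_clm_apply (hdf p) (differentiableAt_const _)]
    simp
  rw [hpd, hpd, hf.contDiffAt.isSymmSndFDerivAt (by simp)]

theorem dotProduct_pd_eq_neg {ι : Type*} [Fintype ι] {f g : (Fin n → ℝ) → ι → ℝ} {c : ℝ}
    {p : Fin n → ℝ} (hf : DifferentiableAt ℝ f p) (hg : DifferentiableAt ℝ g p)
    (h : ∀ q, f q ⬝ᵥ g q = c) (α : Fin n) :
    f p ⬝ᵥ pd g α p = -(g p ⬝ᵥ pd f α p) := by
  have hconst : pd (fun q => f q ⬝ᵥ g q) α p = 0 := by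
    simp [funext h, pd]
  rw [pd_dotProduct hf hg, dotProduct_comm (pd f α p)] at hconst
  linarith

theorem dotProduct_pd_self_eq_zero {ι : Type*} [Fintype ι] {f : (Fin n → ℝ) → ι → ℝ} {c : ℝ}
    {p : Fin n → ℝ} (hf : DifferentiableAt ℝ f p) (h : ∀ q, f q ⬝ᵥ f q = c) (α : Fin n) :
    f p ⬝ᵥ pd f α p = 0 := by
  linarith [dotProduct_pd_eq_neg hf hf h α]

end PartialDerivative

theorem DifferentiableAt.crossProduct {E : Type*} [NormedAddCommGroup E] [NormedSpace ℝ E]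
    {f g : E → Fin 3 → ℝ} {p : E}
    (hf : DifferentiableAt ℝ f p) (hg : DifferentiableAt ℝ g p) :
    DifferentiableAt ℝ (fun q => f q ⨯₃ g q) p :=
  ((_root_.crossProduct : (Fin 3 → ℝ) →ₗ[ℝ] _).toContinuousBilinearMap.differentiableAt.comp p
    hf).clm_apply hg

theorem cross_dot_mul_cross_dot (s t x y : Fin 3 → ℝ) :
    (s ⨯₃ t ⬝ᵥ x) * (s ⨯₃ t ⬝ᵥ y) =
      !![s ⬝ᵥ s, s ⬝ᵥ t, s ⬝ᵥ y; t ⬝ᵥ s, t ⬝ᵥ t, t ⬝ᵥ y; x ⬝ᵥ s, x ⬝ᵥ t, x ⬝ᵥ y].det := by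
  simp only [det_fin_three, cross_apply, dotProduct, Fin.sum_univ_three, of_apply, cons_val',
    cons_val_zero, cons_val_one, cons_val, cons_val_fin_one]
  ring

theorem dotProduct_eq_frame_expansion {s t : Fin 3 → ℝ} (hs : s ⬝ᵥ s = 1) (ht : t ⬝ᵥ t = 1)
    (hst : s ⬝ᵥ t = 0) (x y : Fin 3 → ℝ) :
    x ⬝ᵥ y = (s ⬝ᵥ x) * (s ⬝ᵥ y) + (t ⬝ᵥ x) * (t ⬝ᵥ y) + (s ⨯₃ t ⬝ᵥ x) * (s ⨯₃ t ⬝ᵥ y) := by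
  rw [cross_dot_mul_cross_dot, det_fin_three]
  simp only [of_apply, cons_val', cons_val_zero, cons_val_one, cons_val, cons_val_fin_one]
  rw [dotProduct_comm t s, dotProduct_comm x s, dotProduct_comm x t, hs, ht, hst]
  ring

section Frame

variable {n : ℕ} {S v : (Fin n → ℝ) → Fin 3 → ℝ} {p : Fin n → ℝ}

theorem pd_cross_dotProduct_pd (hS : Differentiable ℝ S) (hv : Differentiable ℝ v)
    (hS1 : ∀ q, S q ⬝ᵥ S q = 1) (hv1 : ∀ q, v q ⬝ᵥ v q = 1) (hSv : ∀ q, S q ⬝ᵥ v q = 0)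
    (α β : Fin n) :
    pd (fun q => S q ⨯₃ v q) α p ⬝ᵥ pd v β p =
      (S p ⨯₃ v p ⬝ᵥ pd S α p) * (v p ⬝ᵥ pd S β p) := by
  have hw : Differentiable ℝ (fun q => S q ⨯₃ v q) := fun q => (hS q).crossProduct (hv q)
  have hw1 : ∀ q, S q ⨯₃ v q ⬝ᵥ S q ⨯₃ v q = 1 := fun q => by
    rw [cross_dot_cross, hS1, hv1, hSv, dotProduct_comm, hSv]; ring
  rw [dotProduct_eq_frame_expansion (hS1 p) (hv1 p) (hSv p),
    dotProduct_pd_eq_neg (hS p) (hw p) (fun q => dot_self_cross (S q) (v q)),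
    dotProduct_pd_eq_neg (hS p) (hv p) hSv, dotProduct_pd_self_eq_zero (hv p) hv1,
    dotProduct_pd_self_eq_zero (hw p) hw1]
  ring

end Frame

/-- Curvature identity `∂_α A_β − ∂_β A_α = Im(ψ_α conj(ψ_β))`. -/
theorem frame_curvature_identity {n : ℕ}
    (S v : (Fin n → ℝ) → Fin 3 → ℝ)
    (hS : ContDiff ℝ 2 S) (hv : ContDiff ℝ 2 v)
    (hS1 : ∀ p, S p ⬝ᵥ S p = 1) (hv1 : ∀ p, v p ⬝ᵥ v p = 1)
    (hSv : ∀ p, S p ⬝ᵥ v p = 0)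
    (w : (Fin n → ℝ) → Fin 3 → ℝ) (hw : ∀ p, w p = crossProduct (S p) (v p)) :
    ∀ (α β : Fin n) (p : Fin n → ℝ),
      pd (frameA v w β) α p - pd (frameA v w α) β p =
        (framePsi S v w α p * (starRingEnd ℂ) (framePsi S v w β p)).im := by
  intro α β p
  obtain rfl : w = fun q => S q ⨯₃ v q := funext hw
  have hSd : Differentiable ℝ S := hS.differentiable two_ne_zero
  have hvd : Differentiable ℝ v := hv.differentiable two_ne_zero
  have pd_frameA : ∀ γ δ, pd (frameA v (fun q => S q ⨯₃ v q) δ) γ p =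
      pd (fun q => S q ⨯₃ v q) γ p ⬝ᵥ pd v δ p + S p ⨯₃ v p ⬝ᵥ pd (pd v δ) γ p :=
    fun γ δ => pd_dotProduct ((hSd p).crossProduct (hvd p))
      ((hv.pd (m := 1) (by norm_num) δ).differentiable one_ne_zero p) γ
  rw [pd_frameA, pd_frameA, pd_cross_dotProduct_pd hSd hvd hS1 hv1 hSv,
    pd_cross_dotProduct_pd hSd hvd hS1 hv1 hSv, pd_pd_comm hv, add_sub_add_right_eq_sub]
  simp only [framePsi, map_add, map_mul, Complex.conj_ofReal, Complex.conj_I,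
    Complex.mul_im, Complex.mul_re, Complex.add_re, Complex.add_im,
    Complex.neg_re, Complex.neg_im, Complex.ofReal_re, Complex.ofReal_im, Complex.I_re,
    Complex.I_im]
  ring
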